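/- arXiv:0804.0123 — 2 statements merged into one kernel-verified Lean document; each statement's English description precedes it below -/
import Mathlib

section
/- Let μ⁺ be a Borel measure on [0,∞) that is finite on compact sets, let ε ≥ 0, and let g : [0,∞) → ℝ be Borel measurable and bounded on bounded intervals, satisfying 0 ≤ g(t) ≤ ε + ∫_{[0,t)} g(s) dμ⁺(s) for all t ≥ 0. Then g(t) ≤ ε · exp(μ⁺([0,t))) for all t ≥ 0. -/
/-!
Let `F t = μ [0, t)`. A compact subset of `[0, t)` on which `F` takes values in an upper set `U`
lies in `[u, t)` for its least point `u`, so the image of `μ` on `[0, t)` under `F` gives `U` at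
most the Lebesgue measure of `U ∩ [0, F t]`. By the layer-cake formula this bounds integrals of
monotone functions of `F`; in particular `∫_{[0,t)} exp (c F) dμ ≤ (exp (c F t) - 1) / c` for
`c > 0`. Consequently a bound `g ≤ ε exp F + K exp (2F)` reproduces itself with `K / 2`; starting
from a bound `K` for `|g|` and halving indefinitely gives `g ≤ ε exp F`.
-/

open MeasureTheory Set Filter Topology Real

theorem lintegral_ofReal_le_of_upperSet_le {ν₁ ν₂ : Measure ℝ}
    (h : ∀ U : Set ℝ, IsUpperSet U → ν₁ U ≤ ν₂ U) {φ : ℝ → ℝ} (hφ : Monotone φ)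
    (hφ_nonneg : 0 ≤ φ) :
    ∫⁻ x, ENNReal.ofReal (φ x) ∂ν₁ ≤ ∫⁻ x, ENNReal.ofReal (φ x) ∂ν₂ := by
  rw [lintegral_eq_lintegral_meas_lt ν₁ (ae_of_all _ hφ_nonneg) hφ.measurable.aemeasurable,
    lintegral_eq_lintegral_meas_lt ν₂ (ae_of_all _ hφ_nonneg) hφ.measurable.aemeasurable]
  exact lintegral_mono fun y => h _ fun x x' hxx' hx => hx.trans_le (hφ hxx')

theorem integral_le_integral_of_upperSet_le {ν₁ ν₂ : Measure ℝ}
    (h : ∀ U : Set ℝ, IsUpperSet U → ν₁ U ≤ ν₂ U) {φ : ℝ → ℝ} (hφ : Monotone φ)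
    (hφ_nonneg : 0 ≤ φ) (hφ_int : Integrable φ ν₂) :
    ∫ x, φ x ∂ν₁ ≤ ∫ x, φ x ∂ν₂ := by
  by_cases hφ_int₁ : Integrable φ ν₁
  · rw [integral_eq_lintegral_of_nonneg_ae (ae_of_all _ hφ_nonneg) hφ_int₁.1,
      integral_eq_lintegral_of_nonneg_ae (ae_of_all _ hφ_nonneg) hφ_int.1]
    exact ENNReal.toReal_mono hφ_int.lintegral_lt_top.ne
      (lintegral_ofReal_le_of_upperSet_le h hφ hφ_nonneg)
  · rw [integral_undef hφ_int₁]
    exact integral_nonneg hφ_nonneg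

noncomputable def icoMass (μ : Measure ℝ) (a t : ℝ) : ℝ := (μ (Ico a t)).toReal

theorem icoMass_nonneg (μ : Measure ℝ) (a t : ℝ) : 0 ≤ icoMass μ a t := ENNReal.toReal_nonneg

section icoMass

variable (μ : Measure ℝ) [IsFiniteMeasureOnCompacts μ] (a : ℝ)

theorem monotone_icoMass : Monotone (icoMass μ a) := fun _ _ h =>
  ENNReal.toReal_mono measure_Ico_lt_top.ne (measure_mono (Ico_subset_Ico_right h))

theorem measure_Ico_eq_ofReal_icoMass_sub {u t : ℝ} (hau : a ≤ u) (hut : u ≤ t) :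
    μ (Ico u t) = ENNReal.ofReal (icoMass μ a t - icoMass μ a u) := by
  have hsplit : μ (Ico a t) = μ (Ico a u) + μ (Ico u t) := by
    rw [← measure_union Ico_disjoint_Ico_same measurableSet_Ico, Ico_union_Ico_eq_Ico hau hut]
  rw [icoMass, icoMass, hsplit, ENNReal.toReal_add measure_Ico_lt_top.ne measure_Ico_lt_top.ne,
    add_sub_cancel_left, ENNReal.ofReal_toReal measure_Ico_lt_top.ne]

theorem map_icoMass_upperSet_le (t : ℝ) (U : Set ℝ) (hU : IsUpperSet U) :
    (μ.restrict (Ico a t)).map (icoMass μ a) U ≤ volume.restrict (Icc 0 (icoMass μ a t)) U := by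
  have hUm : MeasurableSet U := hU.ordConnected.measurableSet
  have hpre : MeasurableSet (icoMass μ a ⁻¹' U) := (monotone_icoMass μ a).measurable hUm
  rw [Measure.map_apply (monotone_icoMass μ a).measurable hUm, Measure.restrict_apply hUm,
    Measure.restrict_apply hpre, (hpre.inter measurableSet_Ico).measure_eq_iSup_isCompact]
  refine iSup₂_le fun K hK => iSup_le fun hKc => ?_
  rcases K.eq_empty_or_nonempty with rfl | hne
  · simp
  obtain ⟨hu_pre, hau, hut⟩ := hK (hKc.sInf_mem hne)
  set u := sInf K
  calc μ K ≤ μ (Ico u t) := measure_mono fun x hx => ⟨csInf_le hKc.bddBelow hx, (hK hx).2.2⟩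
    _ = volume (Icc (icoMass μ a u) (icoMass μ a t)) := by
      rw [measure_Ico_eq_ofReal_icoMass_sub μ a hau hut.le, Real.volume_Icc]
    _ ≤ volume (U ∩ Icc 0 (icoMass μ a t)) :=
      measure_mono fun x hx => ⟨hU hx.1 hu_pre, (icoMass_nonneg μ a u).trans hx.1, hx.2⟩

theorem integrableOn_exp_mul_icoMass (t : ℝ) {c : ℝ} (hc : 0 ≤ c) :
    IntegrableOn (fun u => exp (c * icoMass μ a u)) (Ico a t) μ :=
  ((exp_monotone.comp ((monotone_icoMass μ a).const_mul hc)).monotoneOn _).integrableOn_isCompact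
    isCompact_Icc |>.mono_set Ico_subset_Icc_self

theorem integral_exp_mul_icoMass_le (t : ℝ) {c : ℝ} (hc : 0 < c) :
    ∫ u in Ico a t, exp (c * icoMass μ a u) ∂μ ≤ (exp (c * icoMass μ a t) - 1) / c := by
  have hF := (monotone_icoMass μ a).measurable.aemeasurable (μ := μ.restrict (Ico a t))
  have hexp : Continuous fun x => exp (c * x) := by fun_prop
  calc ∫ u in Ico a t, exp (c * icoMass μ a u) ∂μ
      = ∫ x, exp (c * x) ∂(μ.restrict (Ico a t)).map (icoMass μ a) :=
        (integral_map hF hexp.aestronglyMeasurable).symm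
    _ ≤ ∫ x in Icc 0 (icoMass μ a t), exp (c * x) :=
        integral_le_integral_of_upperSet_le (map_icoMass_upperSet_le μ a t)
          (exp_monotone.comp (monotone_id.const_mul hc.le)) (fun _ => (exp_pos _).le)
          hexp.integrableOn_Icc
    _ = (exp (c * icoMass μ a t) - 1) / c := by
      rw [integral_Icc_eq_integral_Ioc, ← intervalIntegral.integral_of_le (icoMass_nonneg μ a t),
        intervalIntegral.integral_comp_mul_left (fun x => exp x) hc.ne', integral_exp]
      simp [div_eq_inv_mul]

theorem gronwall_bound_halve {ε K T : ℝ} (hε : 0 ≤ ε) (hK : 0 ≤ K) {g : ℝ → ℝ}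
    (hg : IntegrableOn g (Ico a T) μ)
    (hineq : ∀ t ∈ Icc a T, g t ≤ ε + ∫ s in Ico a t, g s ∂μ)
    (hbound : ∀ t ∈ Icc a T, g t ≤ ε * exp (icoMass μ a t) + K * exp (2 * icoMass μ a t)) :
    ∀ t ∈ Icc a T, g t ≤ ε * exp (icoMass μ a t) + K / 2 * exp (2 * icoMass μ a t) := by
  intro t ht
  have h₁ : IntegrableOn (fun s => exp (icoMass μ a s)) (Ico a t) μ := by
    simpa using integrableOn_exp_mul_icoMass μ a t zero_le_one
  have h₂ := integrableOn_exp_mul_icoMass μ a t zero_le_two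
  have hI₁ : ∫ s in Ico a t, exp (icoMass μ a s) ∂μ ≤ exp (icoMass μ a t) - 1 := by
    simpa using integral_exp_mul_icoMass_le μ a t one_pos
  have hI₂ := integral_exp_mul_icoMass_le μ a t two_pos
  calc g t ≤ ε + ∫ s in Ico a t, g s ∂μ := hineq t ht
    _ ≤ ε + ∫ s in Ico a t, ε * exp (icoMass μ a s) + K * exp (2 * icoMass μ a s) ∂μ :=
      add_le_add le_rfl <| setIntegral_mono_on (hg.mono_set (Ico_subset_Ico_right ht.2))
        ((h₁.const_mul ε).add (h₂.const_mul K)) measurableSet_Ico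
        fun s hs => hbound s ⟨hs.1, hs.2.le.trans ht.2⟩
    _ = ε + (ε * ∫ s in Ico a t, exp (icoMass μ a s) ∂μ
          + K * ∫ s in Ico a t, exp (2 * icoMass μ a s) ∂μ) := by
      rw [integral_add (h₁.const_mul ε) (h₂.const_mul K), integral_const_mul, integral_const_mul]
    _ ≤ ε + (ε * (exp (icoMass μ a t) - 1) + K * ((exp (2 * icoMass μ a t) - 1) / 2)) := by
      gcongr
    _ ≤ ε * exp (icoMass μ a t) + K / 2 * exp (2 * icoMass μ a t) := by linarith

theorem gronwall_bound_div_two_pow {ε C T : ℝ} (hε : 0 ≤ ε) (hC : 0 ≤ C) {g : ℝ → ℝ}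
    (hg : IntegrableOn g (Ico a T) μ)
    (hineq : ∀ t ∈ Icc a T, g t ≤ ε + ∫ s in Ico a t, g s ∂μ)
    (hgC : ∀ t ∈ Icc a T, g t ≤ C) (n : ℕ) :
    ∀ t ∈ Icc a T, g t ≤ ε * exp (icoMass μ a t) + C / 2 ^ n * exp (2 * icoMass μ a t) := by
  induction n with
  | zero =>
    intro t ht
    calc g t ≤ C := hgC t ht
      _ ≤ C * exp (2 * icoMass μ a t) :=
        le_mul_of_one_le_right hC (one_le_exp (mul_nonneg zero_le_two (icoMass_nonneg μ a t)))
      _ ≤ ε * exp (icoMass μ a t) + C / 2 ^ 0 * exp (2 * icoMass μ a t) := by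
        rw [pow_zero, div_one]
        exact le_add_of_nonneg_left (by positivity)
  | succ n ih =>
    simpa only [pow_succ, div_div] using
      gronwall_bound_halve μ a hε (by positivity) hg hineq ih

end icoMass

theorem generalized_gronwall_general (μ : Measure ℝ) [IsFiniteMeasureOnCompacts μ]
    (ε : ℝ) (hε : 0 ≤ ε) (g : ℝ → ℝ) (hmeas : Measurable g)
    (hbdd : ∀ T : ℝ, ∃ C : ℝ, ∀ t ∈ Icc (0:ℝ) T, |g t| ≤ C)
    (hineq : ∀ t, 0 ≤ t → g t ≤ ε + ∫ s in Ico (0:ℝ) t, g s ∂μ) :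
    ∀ t, 0 ≤ t → g t ≤ ε * Real.exp (μ (Ico (0:ℝ) t)).toReal := by
  intro T hT
  obtain ⟨C, hC⟩ := hbdd T
  have hC_nonneg : 0 ≤ C := (abs_nonneg _).trans (hC T ⟨hT, le_rfl⟩)
  have hg : IntegrableOn g (Ico 0 T) μ :=
    Measure.integrableOn_of_bounded measure_Ico_lt_top.ne hmeas.aestronglyMeasurable <|
      (ae_restrict_iff' measurableSet_Ico).2 <|
        ae_of_all _ fun t ht => hC t (Ico_subset_Icc_self ht)
  have hbound (n : ℕ) :=
    gronwall_bound_div_two_pow μ 0 hε hC_nonneg hg (fun t ht => hineq t ht.1)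
      (fun t ht => (le_abs_self _).trans (hC t ht)) n T ⟨hT, le_rfl⟩
  have hlim : Tendsto (fun n : ℕ => C / 2 ^ n) atTop (𝓝 0) := by
    simpa [div_eq_mul_inv] using (tendsto_pow_atTop_nhds_zero_of_lt_one
      (r := (2 : ℝ)⁻¹) (by norm_num) (by norm_num)).const_mul C
  show g T ≤ ε * exp (icoMass μ 0 T)
  refine ge_of_tendsto' (x := atTop) ?_ hbound
  simpa using (hlim.mul_const (exp (2 * icoMass μ 0 T))).const_add (ε * exp (icoMass μ 0 T))

/-- Generalized Gronwall inequality with a general Borel measure. -/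
theorem generalized_gronwall (μ : Measure ℝ) [IsFiniteMeasureOnCompacts μ]
    (ε : ℝ) (hε : 0 ≤ ε) (g : ℝ → ℝ) (hmeas : Measurable g)
    (hbdd : ∀ T : ℝ, ∃ C : ℝ, ∀ t ∈ Icc (0:ℝ) T, |g t| ≤ C)
    (hpos : ∀ t, 0 ≤ t → 0 ≤ g t)
    (hineq : ∀ t, 0 ≤ t → g t ≤ ε + ∫ s in Ico (0:ℝ) t, g s ∂μ) :
    ∀ t, 0 ≤ t → g t ≤ ε * Real.exp (μ (Ico (0:ℝ) t)).toReal :=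
  generalized_gronwall_general μ ε hε g hmeas hbdd hineq
end

section
/- Let δ > 0, b ≥ 0, σ > 0, c > 0, and let g, f_g be as follows: g : ℝ → [0,∞) is C¹ with g = 0 on (-∞,0], g(x) = x^{δ/2+2} on [0,c/2], g' ≥ 0 on (-∞,c] and g' ≤ 0 on [c,∞); f_g(x) = -∫₀^{-x} y^{δ/2} e^{by/2} dy for x < 0 and f_g(x) = ∫₀^x g(y) y^{-δ/2} e^{by/2} dy for x ≥ 0. Then the second derivative of f_g exists on ℝ \ {0} and is locally integrable on ℝ, and L f_g(x) := (σ²/2)|x| f_g''(x) + (σ²/4)(δ - bx) f_g'(x) satisfies L f_g(x) = (σ²/2)·x^{1-δ/2}·e^{bx/2}·g'(x)·1_{x>0} for all x ≠ 0, i.e. L f_g(x) = 0 for x < 0. -/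
/-!
For `x < 0`, `fg' x = w (-x)` with `w t = t ^ (δ/2) * exp (b t / 2)`, and for `x > 0`,
`fg' x = g x * v x` with `v x = x ^ (-δ/2) * exp (b x / 2)`: these are the scale densities of the
generator on the two half-lines. Every weight `t ^ p * exp (b t / 2)` solves
`t * w' t = (p + b t / 2) * w t`, so the drift term cancels everything in `σ²/2 |x| fg''` except
`σ²/2 x g' v`. Near `0`, `fg''` is the derivative of `t ^ (δ/2) * exp (b t / 2)` on the left and,
since `g x = x ^ (δ/2 + 2)` there, of `x ^ 2 * exp (b x / 2)` on the right; both are integrable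
because the exponents are positive.
-/

open MeasureTheory Set

noncomputable def expWeight (p b t : ℝ) : ℝ := t ^ p * Real.exp (b * t / 2)

section ExpWeight

variable {p b t : ℝ}

lemma hasDerivAt_expWeight (ht : t ≠ 0) :
    HasDerivAt (expWeight p b)
      (p * t ^ (p - 1) * Real.exp (b * t / 2) + b / 2 * expWeight p b t) t := by
  have hexp : HasDerivAt (fun s => Real.exp (b * s / 2)) (Real.exp (b * t / 2) * (b / 2)) t := by
    simpa using (((hasDerivAt_id' t).const_mul b).div_const 2).exp
  exact ((Real.hasDerivAt_rpow_const (Or.inl ht)).mul hexp).congr_deriv (by unfold expWeight; ring)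

lemma mul_deriv_expWeight (ht : t ≠ 0) :
    t * deriv (expWeight p b) t = (p + b * t / 2) * expWeight p b t := by
  rw [(hasDerivAt_expWeight ht).deriv, expWeight, Real.rpow_sub_one ht]
  field_simp

lemma continuous_expWeight (hp : 0 ≤ p) : Continuous (expWeight p b) := by
  unfold expWeight; fun_prop (disch := assumption)

lemma contDiffOn_expWeight {n : WithTop ℕ∞} : ContDiffOn ℝ n (expWeight p b) {0}ᶜ := by
  intro t ht
  exact ((Real.contDiffAt_rpow_const_of_ne ht).mul (by fun_prop)).contDiffWithinAt

lemma continuousOn_deriv_expWeight : ContinuousOn (deriv (expWeight p b)) {0}ᶜ :=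
  contDiffOn_expWeight.continuousOn_deriv_of_isOpen isOpen_compl_singleton le_rfl

lemma intervalIntegrable_deriv_expWeight (hp : 0 < p) (b r : ℝ) :
    IntervalIntegrable (deriv (expWeight p b)) volume 0 r := by
  have hexp : Continuous fun t => Real.exp (b * t / 2) := by fun_prop
  have h : IntervalIntegrable
      (fun t => p * t ^ (p - 1) * Real.exp (b * t / 2) + b / 2 * expWeight p b t) volume 0 r :=
    (((intervalIntegral.intervalIntegrable_rpow' (by linarith)).const_mul p).mul_continuousOn
      hexp.continuousOn).add (((continuous_expWeight hp.le).const_mul _).intervalIntegrable _ _)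
  refine h.congr_uIoo fun t ht => ((hasDerivAt_expWeight ?_).deriv).symm
  exact ne_of_mem_of_not_mem ht left_notMem_uIoo

lemma rpow_add_mul_expWeight_neg (ht : 0 < t) (q : ℝ) :
    t ^ (p + q) * expWeight (-p) b t = expWeight q b t := by
  rw [expWeight, expWeight, ← mul_assoc, ← Real.rpow_add ht, add_neg_cancel_comm]

end ExpWeight

section FTC

variable {E : Type*} [NormedAddCommGroup E] [NormedSpace ℝ E] [CompleteSpace E]
  {f k : ℝ → E} {s : Set ℝ} {a : ℝ}

lemma eqOn_deriv_of_eqOn_integral (hk : Continuous k) (hs : IsOpen s)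
    (hf : EqOn f (fun x => ∫ y in a..x, k y) s) : EqOn (deriv f) k s :=
  fun x hx => (hf.deriv hs hx).trans (hk.deriv_integral k a x)

lemma eqOn_deriv_of_eqOn_neg_integral_neg (hk : Continuous k) (hs : IsOpen s)
    (hf : EqOn f (fun x => -∫ y in a..(-x), k y) s) : EqOn (deriv f) (fun x => k (-x)) s := by
  intro x hx
  refine (hf.deriv hs hx).trans (HasDerivAt.deriv ?_)
  simpa [Function.comp_def, Pi.neg_def] using
    ((hk.integral_hasStrictDerivAt a (-x)).hasDerivAt.scomp x (hasDerivAt_neg x)).neg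

end FTC

lemma continuous_mul_expWeight_neg {g : ℝ → ℝ} {p q b ε : ℝ} (hq : 0 < q) (hε : 0 < ε)
    (hg : Continuous g) (hg0 : ∀ x ≤ 0, g x = 0)
    (hgε : ∀ x ∈ Ioo 0 ε, g x = x ^ (p + q)) :
    Continuous fun x => g x * expWeight (-p) b x := by
  rw [continuous_iff_continuousAt]
  intro x
  rcases eq_or_ne x 0 with rfl | hx
  · have hnear : (fun x => max x 0 ^ q * Real.exp (b * x / 2)) =ᶠ[nhds 0]
        fun x => g x * expWeight (-p) b x := by
      filter_upwards [Iio_mem_nhds hε] with x hx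
      rcases le_or_gt x 0 with hx0 | hx0
      · rw [max_eq_right hx0, Real.zero_rpow hq.ne', hg0 x hx0]; simp
      · rw [max_eq_left hx0.le, hgε x ⟨hx0, hx⟩, rpow_add_mul_expWeight_neg hx0, expWeight]
    refine ContinuousAt.congr ?_ hnear
    exact ((Real.continuous_rpow_const hq.le).comp
      (continuous_id.max continuous_const)).continuousAt.mul (by fun_prop)
  · exact hg.continuousAt.mul ((contDiffOn_expWeight (n := 0)).continuousOn.continuousAt
      (isOpen_compl_singleton.mem_nhds hx))

lemma locallyIntegrable_of_locallyIntegrableOn_Iio_Ioi {E : Type*} [NormedAddCommGroup E]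
    {f : ℝ → E} {a r : ℝ} (hr : 0 < r)
    (hlt : LocallyIntegrableOn f (Iio a)) (hgt : LocallyIntegrableOn f (Ioi a))
    (hlt₀ : IntegrableOn f (Ioo (a - r) a)) (hgt₀ : IntegrableOn f (Ioo a (a + r))) :
    LocallyIntegrable f := by
  intro x
  rcases lt_trichotomy x a with hx | rfl | hx
  · simpa only [isOpen_Iio.nhdsWithin_eq (show x ∈ Iio a from hx)] using hlt x hx
  · refine ⟨Ioo (x - r) (x + r), Ioo_mem_nhds (by linarith) (by linarith), ?_⟩
    rw [← Ioc_union_Ioo_eq_Ioo (b := x) (by linarith) (by linarith)]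
    exact ((integrableOn_Ioc_iff_integrableOn_Ioo).2 hlt₀).union hgt₀
  · simpa only [isOpen_Ioi.nhdsWithin_eq (show x ∈ Ioi a from hx)] using hgt x hx

section Generator

variable {δ b x : ℝ} (σ : ℝ)

lemma generator_expWeight_comp_neg (hx : x < 0) :
    σ^2/2 * |x| * -deriv (expWeight (δ/2) b) (-x) + σ^2/4 * (δ - b*x) * expWeight (δ/2) b (-x)
      = 0 := by
  have h := mul_deriv_expWeight (p := δ/2) (b := b) (neg_ne_zero.2 hx.ne)
  rw [abs_of_neg hx]
  linear_combination (-σ^2/2) * h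

lemma generator_mul_expWeight (hx : 0 < x) (G G' : ℝ) :
    σ^2/2 * |x| * (G' * expWeight (-(δ/2)) b x + G * deriv (expWeight (-(δ/2)) b) x)
        + σ^2/4 * (δ - b*x) * (G * expWeight (-(δ/2)) b x)
      = σ^2/2 * x ^ (1 - δ/2) * Real.exp (b*x/2) * G' := by
  have h := mul_deriv_expWeight (p := -(δ/2)) (b := b) hx.ne'
  rw [abs_of_pos hx, show 1 - δ/2 = 1 + -(δ/2) by ring, Real.rpow_add hx, Real.rpow_one]
  unfold expWeight at h ⊢
  linear_combination (σ^2/2 * G) * h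

end Generator

lemma locallyIntegrable_of_eqOn_expWeight {F g : ℝ → ℝ} {p q b r : ℝ}
    (hp : 0 < p) (hq : 0 < q) (hr : 0 < r) (hg : ContDiff ℝ 1 g)
    (hneg : EqOn F (fun y => -deriv (expWeight p b) (-y)) (Iio 0))
    (hpos : EqOn F (fun y => deriv g y * expWeight (-p) b y + g y * deriv (expWeight (-p) b) y)
      (Ioi 0))
    (hnear : EqOn F (deriv (expWeight q b)) (Ioo 0 r)) :
    LocallyIntegrable F := by
  have hw : ContinuousOn (expWeight (-p) b) (Ioi 0) :=
    (contDiffOn_expWeight (n := 0)).continuousOn.mono fun y hy => ne_of_gt hy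
  refine locallyIntegrable_of_locallyIntegrableOn_Iio_Ioi (a := 0) hr ?_ ?_ ?_ ?_
  · refine ContinuousOn.locallyIntegrableOn (ContinuousOn.congr ?_ hneg) measurableSet_Iio
    exact (continuousOn_deriv_expWeight.comp continuous_neg.continuousOn
      fun y hy => neg_ne_zero.2 (ne_of_lt hy)).neg
  · refine ContinuousOn.locallyIntegrableOn (ContinuousOn.congr ?_ hpos) measurableSet_Ioi
    exact ((hg.continuous_deriv le_rfl).continuousOn.mul hw).add (hg.continuous.continuousOn.mul
      (continuousOn_deriv_expWeight.mono fun y hy => ne_of_gt hy))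
  · have h :=
      ((IntervalIntegrable.iff_comp_neg).1 (intervalIntegrable_deriv_expWeight hp b r)).symm.neg
    rw [neg_zero, intervalIntegrable_iff_integrableOn_Ioc_of_le (by linarith)] at h
    rw [zero_sub]
    exact (h.mono_set Ioo_subset_Ioc_self).congr_fun (fun y hy => (hneg hy.2).symm)
      measurableSet_Ioo
  · have h := intervalIntegrable_deriv_expWeight hq b r
    rw [intervalIntegrable_iff_integrableOn_Ioc_of_le hr.le] at h
    rw [zero_add]
    exact (h.mono_set Ioo_subset_Ioc_self).congr_fun (fun y hy => (hnear hy).symm)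
      measurableSet_Ioo

theorem fg_second_derivative_and_generator_general (δ b σ c : ℝ)
    (hδ : 0 < δ) (hc : 0 < c)
    (g : ℝ → ℝ) (hg : ContDiff ℝ 1 g)
    (hg0 : ∀ x ≤ (0:ℝ), g x = 0)
    (hgc : ∀ x ∈ Set.Icc (0:ℝ) (c/2), g x = x ^ (δ/2 + 2))
    (fg : ℝ → ℝ)
    (hfg_neg : ∀ x < (0:ℝ), fg x = -(∫ y in (0:ℝ)..(-x), y ^ (δ/2) * Real.exp (b*y/2)))
    (hfg_pos : ∀ x ≥ (0:ℝ), fg x = ∫ y in (0:ℝ)..x, g y * y ^ (-(δ/2)) * Real.exp (b*y/2)) :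
    (∀ x : ℝ, x ≠ 0 → DifferentiableAt ℝ (deriv fg) x) ∧
    LocallyIntegrable (deriv (deriv fg)) volume ∧
    (∀ x : ℝ, x ≠ 0 →
      σ^2/2 * |x| * deriv (deriv fg) x + σ^2/4 * (δ - b*x) * deriv fg x =
        if 0 < x then σ^2/2 * x ^ (1 - δ/2) * Real.exp (b*x/2) * deriv g x else 0) := by
  set wL := expWeight (δ/2) b
  set wR := expWeight (-(δ/2)) b
  have hgc' : ∀ x ∈ Ioo 0 (c/2), g x = x ^ (δ/2 + 2) := fun x hx =>
    hgc x (Ioo_subset_Icc_self hx)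
  have hfg'_neg : EqOn (deriv fg) (fun y => wL (-y)) (Iio 0) :=
    eqOn_deriv_of_eqOn_neg_integral_neg (continuous_expWeight (by positivity)) isOpen_Iio hfg_neg
  have hfg'_pos : EqOn (deriv fg) (fun y => g y * wR y) (Ioi 0) :=
    eqOn_deriv_of_eqOn_integral (a := 0)
      (continuous_mul_expWeight_neg two_pos (half_pos hc) hg.continuous hg0 hgc') isOpen_Ioi
      fun x hx => by simp only [hfg_pos x (le_of_lt hx), wR, expWeight, mul_assoc]
  have hfg'_near : EqOn (deriv fg) (expWeight 2 b) (Ioo 0 (c/2)) := fun x hx => by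
    rw [hfg'_pos hx.1]
    exact (congrArg (· * wR x) (hgc' x hx)).trans (rpow_add_mul_expWeight_neg hx.1 2)
  have hfg''_neg : ∀ x < 0, HasDerivAt (deriv fg) (-deriv wL (-x)) x := fun x hx =>
    (((hasDerivAt_expWeight (neg_ne_zero.2 hx.ne)).differentiableAt.hasDerivAt.comp x
      (hasDerivAt_neg x)).congr_deriv (mul_neg_one _)).congr_of_eventuallyEq
      (hfg'_neg.eventuallyEq_of_mem (Iio_mem_nhds hx))
  have hfg''_pos : ∀ x > 0, HasDerivAt (deriv fg) (deriv g x * wR x + g x * deriv wR x) x :=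
    fun x hx => ((hg.differentiable one_ne_zero x).hasDerivAt.mul
      (hasDerivAt_expWeight hx.ne').differentiableAt.hasDerivAt).congr_of_eventuallyEq
      (hfg'_pos.eventuallyEq_of_mem (Ioi_mem_nhds hx))
  refine ⟨fun x hx => ?_, ?_, fun x hx => ?_⟩
  · rcases hx.lt_or_gt with hx | hx
    exacts [(hfg''_neg x hx).differentiableAt, (hfg''_pos x hx).differentiableAt]
  · exact locallyIntegrable_of_eqOn_expWeight (half_pos hδ) two_pos (half_pos hc) hg
      (fun x hx => (hfg''_neg x hx).deriv) (fun x hx => (hfg''_pos x hx).deriv)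
      (hfg'_near.deriv isOpen_Ioo)
  · rcases hx.lt_or_gt with hx | hx
    · rw [(hfg''_neg x hx).deriv, hfg'_neg hx, if_neg hx.not_gt]
      exact generator_expWeight_comp_neg σ hx
    · rw [(hfg''_pos x hx).deriv, hfg'_pos hx, if_pos hx]
      exact generator_mul_expWeight σ hx (g x) (deriv g x)

theorem fg_second_derivative_and_generator (δ b σ c : ℝ)
    (hδ : 0 < δ) (hb : 0 ≤ b) (hσ : 0 < σ) (hc : 0 < c)
    (g : ℝ → ℝ) (hg : ContDiff ℝ 1 g) (hgnn : ∀ x, 0 ≤ g x)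
    (hg0 : ∀ x ≤ (0:ℝ), g x = 0)
    (hgc : ∀ x ∈ Set.Icc (0:ℝ) (c/2), g x = x ^ (δ/2 + 2))
    (hg_inc : ∀ x ≤ c, 0 ≤ deriv g x) (hg_dec : ∀ x ≥ c, deriv g x ≤ 0)
    (fg : ℝ → ℝ)
    (hfg_neg : ∀ x < (0:ℝ), fg x = -(∫ y in (0:ℝ)..(-x), y ^ (δ/2) * Real.exp (b*y/2)))
    (hfg_pos : ∀ x ≥ (0:ℝ), fg x = ∫ y in (0:ℝ)..x, g y * y ^ (-(δ/2)) * Real.exp (b*y/2)) :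
    (∀ x : ℝ, x ≠ 0 → DifferentiableAt ℝ (deriv fg) x) ∧
    LocallyIntegrable (deriv (deriv fg)) volume ∧
    (∀ x : ℝ, x ≠ 0 →
      σ^2/2 * |x| * deriv (deriv fg) x + σ^2/4 * (δ - b*x) * deriv fg x =
        if 0 < x then σ^2/2 * x ^ (1 - δ/2) * Real.exp (b*x/2) * deriv g x else 0) :=
  fg_second_derivative_and_generator_general δ b σ c hδ hc g hg hg0 hgc fg hfg_neg hfg_pos
end
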